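/- (Theorem 1 for IHTC, parts (i)–(ii)) Under the setting of the IHTC continuation algorithm — Ψ ∈ ℝ^{n×p} with unit-norm columns and mutual coherence μ satisfying μ·s < 1/2; x† ∈ ℝ^p with support A†, |A†| = s ≥ 1; y = Ψ x† + η with ‖η‖₂ ≤ ε > 0; C₀ > 1/(2(1 − 2μs)²); α = (1 − 1/√(2C₀))/(μs); γ ∈ [(2μs/(1 − 1/√(2C₀)))², 1); K ≥ 1; λ_ℓ = γ^ℓ λ₀ with ‖x†‖_{ℓ∞} ≤ α √(2γλ₀); x(λ₀) = 0 and x(λ_ℓ) obtained by K iterations of z ↦ H_{λ_ℓ}(z + Ψᵗ(y − Ψ z)) from x(λ_{ℓ−1}) — let λ* = C₀ ε² and let ℓ* be the first index with λ_{ℓ*} < λ*, and set x* = x(λ_{ℓ*−1}). Then (i) supp(x*) ⊂ A†, and (ii) ‖x* − x†‖_{ℓ∞} ≤ (√(2C₀) − 1)ε/(μs). -/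

import Mathlib

open Finset Matrix

/-- The hard-thresholding operator `H_λ(t) = t` if `|t| > √(2λ)`, else `0`. -/
noncomputable def hardThresh (lam t : ℝ) : ℝ :=
  if Real.sqrt (2 * lam) < |t| then t else 0

/-!
Write `τ = √(2λ)`. If `z` is supported in `A†` and `‖z - x†‖∞ ≤ α τ`, the gradient step
`w = z + Ψᵀ(y - Ψz)` has error `(I - ΨᵀΨ)(z - x†) + Ψᵀη`, whose entries are at most
`s μ α τ + ε = (1 - β) τ + ε ≤ τ` as long as `ε ≤ β τ`, where `β = 1/√(2C₀)`.
Thresholding at `τ` then kills every entry off `A†` and leaves an error at most `2τ ≤ α τ`,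
so the set of such `z` is invariant under the inner iterations. Passing from `λ_ℓ` to
`λ_{ℓ+1} = γ λ_ℓ` shrinks `τ` by `√γ`, and `2 ≤ α √γ` makes `2 τ_ℓ ≤ α τ_{ℓ+1}`, so the
invariant propagates along the path as long as `λ_ℓ ≥ C₀ ε²`. At the last such level the
error is `α √(2 λ_{ℓ*}) < α √(2C₀) ε`.
-/

open Function Set

theorem Set.MapsTo.iterate_of_subset {α : Type*} {f : α → α} {s t : Set α} (h : MapsTo f s t)
    (hts : t ⊆ s) {n : ℕ} (hn : 1 ≤ n) : MapsTo f^[n] s t := by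
  obtain ⟨k, rfl⟩ := Nat.exists_eq_add_of_le' hn
  rw [iterate_succ']
  exact h.comp ((h.mono_right hts).iterate k)

section HardThreshold

variable {lam t a : ℝ}

theorem hardThresh_eq_zero_of_abs_le (h : |t| ≤ Real.sqrt (2 * lam)) : hardThresh lam t = 0 :=
  if_neg h.not_gt

theorem abs_hardThresh_sub_le (h : |t - a| ≤ Real.sqrt (2 * lam)) :
    |hardThresh lam t - a| ≤ 2 * Real.sqrt (2 * lam) := by
  have hτ := Real.sqrt_nonneg (2 * lam)
  unfold hardThresh
  split_ifs with ht
  · linarith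
  · calc |0 - a| = |(t - a) - t| := by congr 1; ring
      _ ≤ |t - a| + |t| := abs_sub _ _
      _ ≤ 2 * Real.sqrt (2 * lam) := by linarith [not_lt.1 ht]

variable {ι : Type*} [Fintype ι] {w x : ι → ℝ}

theorem support_hardThresh_subset (h : ‖w - x‖ ≤ Real.sqrt (2 * lam)) :
    support (fun i => hardThresh lam (w i)) ⊆ support x := by
  intro i hi
  by_contra hxi
  rw [notMem_support] at hxi
  refine hi (hardThresh_eq_zero_of_abs_le ?_)
  simpa [hxi] using (norm_le_pi_norm (w - x) i).trans h

theorem norm_hardThresh_sub_le (h : ‖w - x‖ ≤ Real.sqrt (2 * lam)) :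
    ‖(fun i => hardThresh lam (w i)) - x‖ ≤ 2 * Real.sqrt (2 * lam) := by
  rw [pi_norm_le_iff_of_nonneg (by positivity)]
  exact fun i => abs_hardThresh_sub_le ((norm_le_pi_norm (w - x) i).trans h)

end HardThreshold

theorem Matrix.abs_mulVec_apply_le_of_support_subset {m ι : Type*} [Fintype ι]
    {M : Matrix m ι ℝ} {v : ι → ℝ} {A : Finset ι} {μ d : ℝ} (i : m) (hM : ∀ j, |M i j| ≤ μ) (hv : support v ⊆ A)
    (hd : ‖v‖ ≤ d) : |(M *ᵥ v) i| ≤ #A * (μ * d) := by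
  have hsum : (M *ᵥ v) i = ∑ j ∈ A, M i j * v j := by
    refine (sum_subset (subset_univ A) fun j _ hj => ?_).symm
    rw [notMem_support.1 fun h => hj (hv h), mul_zero]
  calc |(M *ᵥ v) i| ≤ ∑ j ∈ A, |M i j| * |v j| := by
        rw [hsum]
        exact (abs_sum_le_sum_abs _ _).trans_eq (sum_congr rfl fun j _ => abs_mul _ _)
    _ ≤ ∑ _j ∈ A, μ * d := sum_le_sum fun j _ =>
        mul_le_mul (hM j) ((norm_le_pi_norm v j).trans hd) (abs_nonneg _)
          ((abs_nonneg _).trans (hM j))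
    _ = #A * (μ * d) := by rw [sum_const, nsmul_eq_mul]

section Gram

variable {m ι : Type*} [Fintype m] {Ψ : Matrix m ι ℝ}

theorem abs_one_sub_transpose_mul_self_apply_le [Fintype ι] [DecidableEq ι] {μ : ℝ}
    (hcol : ∀ i, ∑ k, Ψ k i ^ 2 = 1) (hcoh : ∀ i j, i ≠ j → |∑ k, Ψ k i * Ψ k j| ≤ μ)
    (hμ : 0 ≤ μ) (i j : ι) : |(1 - Ψᵀ * Ψ : Matrix ι ι ℝ) i j| ≤ μ := by
  by_cases hij : i = j
  · subst hij
    simp [mul_apply, ← sq, hcol, hμ]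
  · simpa [mul_apply, one_apply_ne hij] using hcoh i j hij

theorem abs_transpose_mulVec_apply_le (hcol : ∀ i, ∑ k, Ψ k i ^ 2 = 1) (η : m → ℝ) (i : ι) :
    |(Ψᵀ *ᵥ η) i| ≤ Real.sqrt (∑ k, η k ^ 2) := by
  have hcs : (∑ k, Ψ k i * η k) ^ 2 ≤ (∑ k, Ψ k i ^ 2) * ∑ k, η k ^ 2 :=
    sum_mul_sq_le_sq_mul_sq _ _ _
  rw [hcol, one_mul] at hcs
  simpa [mulVec, dotProduct] using Real.abs_le_sqrt hcs

theorem add_transpose_mulVec_sub_sub [Fintype ι] [DecidableEq ι] (x z : ι → ℝ) (η : m → ℝ) :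
    z + Ψᵀ *ᵥ (Ψ *ᵥ x + η - Ψ *ᵥ z) - x = (1 - Ψᵀ * Ψ) *ᵥ (z - x) + Ψᵀ *ᵥ η := by
  simp only [sub_mulVec, one_mulVec, ← mulVec_mulVec, mulVec_sub, mulVec_add]
  abel

end Gram

section IHT

variable {m ι : Type*} [Fintype m] [Fintype ι]

noncomputable def ihtStep (Ψ : Matrix m ι ℝ) (y : m → ℝ) (lam : ℝ) (z : ι → ℝ) : ι → ℝ :=
  fun i => hardThresh lam ((z + Ψᵀ *ᵥ (y - Ψ *ᵥ z)) i)

def supportedBall (A : Finset ι) (x : ι → ℝ) (r : ℝ) : Set (ι → ℝ) :=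
  {z | support z ⊆ A ∧ ‖z - x‖ ≤ r}

theorem supportedBall_mono {A : Finset ι} {x : ι → ℝ} {r r' : ℝ} (h : r ≤ r') :
    supportedBall A x r ⊆ supportedBall A x r' :=
  fun _ hz => ⟨hz.1, hz.2.trans h⟩

variable {Ψ : Matrix m ι ℝ} {x : ι → ℝ} {η : m → ℝ} {A : Finset ι} {μ ε α β lam : ℝ}

theorem norm_add_transpose_mulVec_sub_sub_le (hcol : ∀ i, ∑ k, Ψ k i ^ 2 = 1)
    (hcoh : ∀ i j, i ≠ j → |∑ k, Ψ k i * Ψ k j| ≤ μ) (hμ : 0 ≤ μ) (hx : support x ⊆ A)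
    (hη : Real.sqrt (∑ k, η k ^ 2) ≤ ε) {z : ι → ℝ} (hz : support z ⊆ A) {d : ℝ}
    (hd : ‖z - x‖ ≤ d) : ‖z + Ψᵀ *ᵥ (Ψ *ᵥ x + η - Ψ *ᵥ z) - x‖ ≤ #A * (μ * d) + ε := by
  classical
  have hε : 0 ≤ ε := (Real.sqrt_nonneg _).trans hη
  have hd0 : 0 ≤ d := (norm_nonneg _).trans hd
  rw [add_transpose_mulVec_sub_sub, pi_norm_le_iff_of_nonneg (by positivity)]
  intro i
  have hzx : support (z - x) ⊆ A := (support_sub z x).trans (union_subset hz hx)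
  calc ‖((1 - Ψᵀ * Ψ : Matrix ι ι ℝ) *ᵥ (z - x) + Ψᵀ *ᵥ η) i‖
      ≤ |((1 - Ψᵀ * Ψ) *ᵥ (z - x)) i| + |(Ψᵀ *ᵥ η) i| := abs_add_le _ _
    _ ≤ #A * (μ * d) + ε := add_le_add
        (abs_mulVec_apply_le_of_support_subset i
          (abs_one_sub_transpose_mul_self_apply_le hcol hcoh hμ i) hzx hd)
        ((abs_transpose_mulVec_apply_le hcol η i).trans hη)

theorem mapsTo_ihtStep (hcol : ∀ i, ∑ k, Ψ k i ^ 2 = 1)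
    (hcoh : ∀ i j, i ≠ j → |∑ k, Ψ k i * Ψ k j| ≤ μ) (hμ : 0 ≤ μ) (hx : support x ⊆ A)
    (hη : Real.sqrt (∑ k, η k ^ 2) ≤ ε) (hα : #A * μ * α ≤ 1 - β)
    (hε : ε ≤ β * Real.sqrt (2 * lam)) :
    MapsTo (ihtStep Ψ (Ψ *ᵥ x + η) lam) (supportedBall A x (α * Real.sqrt (2 * lam)))
      (supportedBall A x (2 * Real.sqrt (2 * lam))) := by
  rintro z ⟨hz, hd⟩
  have hτ := Real.sqrt_nonneg (2 * lam)
  have hw : ‖z + Ψᵀ *ᵥ (Ψ *ᵥ x + η - Ψ *ᵥ z) - x‖ ≤ Real.sqrt (2 * lam) := by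
    refine (norm_add_transpose_mulVec_sub_sub_le hcol hcoh hμ hx hη hz hd).trans ?_
    nlinarith
  exact ⟨(support_hardThresh_subset hw).trans hx, norm_hardThresh_sub_le hw⟩

theorem mapsTo_iterate_ihtStep (hcol : ∀ i, ∑ k, Ψ k i ^ 2 = 1)
    (hcoh : ∀ i j, i ≠ j → |∑ k, Ψ k i * Ψ k j| ≤ μ) (hμ : 0 ≤ μ) (hx : support x ⊆ A)
    (hη : Real.sqrt (∑ k, η k ^ 2) ≤ ε) (hα : #A * μ * α ≤ 1 - β) (h2α : 2 ≤ α)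
    (hε : ε ≤ β * Real.sqrt (2 * lam)) {K : ℕ} (hK : 1 ≤ K) :
    MapsTo (ihtStep Ψ (Ψ *ᵥ x + η) lam)^[K] (supportedBall A x (α * Real.sqrt (2 * lam)))
      (supportedBall A x (2 * Real.sqrt (2 * lam))) :=
  (mapsTo_ihtStep hcol hcoh hμ hx hη hα hε).iterate_of_subset
    (supportedBall_mono (by gcongr)) hK

theorem mem_supportedBall_of_continuation (hcol : ∀ i, ∑ k, Ψ k i ^ 2 = 1)
    (hcoh : ∀ i j, i ≠ j → |∑ k, Ψ k i * Ψ k j| ≤ μ) (hμ : 0 ≤ μ) (hx : support x ⊆ A)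
    (hη : Real.sqrt (∑ k, η k ^ 2) ≤ ε) (hα : #A * μ * α ≤ 1 - β) (h2α : 2 ≤ α) {γ lam₀ : ℝ}
    (hγ : 0 ≤ γ) (hαγ : 2 ≤ α * Real.sqrt γ) {K L : ℕ} (hK : 1 ≤ K) {xseq : ℕ → ι → ℝ}
    (hx0 : xseq 0 = 0)
    (hxstep : ∀ ℓ, xseq (ℓ + 1) = (ihtStep Ψ (Ψ *ᵥ x + η) (γ ^ (ℓ + 1) * lam₀))^[K] (xseq ℓ))
    (hlam₀ : ‖x‖ ≤ α * Real.sqrt (2 * γ * lam₀))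
    (hlevel : ∀ ℓ < L, ε ≤ β * Real.sqrt (2 * (γ ^ ℓ * lam₀))) :
    ∀ ℓ < L, xseq ℓ ∈ supportedBall A x (α * Real.sqrt (2 * (γ ^ (ℓ + 1) * lam₀))) := by
  intro ℓ
  induction ℓ with
  | zero =>
    intro _
    rw [hx0, zero_add, pow_one, ← mul_assoc]
    exact ⟨by simp, by rwa [zero_sub, norm_neg]⟩
  | succ ℓ ih =>
    intro hℓ
    have hstep := mapsTo_iterate_ihtStep hcol hcoh hμ hx hη hα h2α (hlevel (ℓ + 1) hℓ) hK
      (ih (by omega))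
    rw [← hxstep] at hstep
    refine supportedBall_mono ?_ hstep
    rw [show 2 * (γ ^ (ℓ + 1 + 1) * lam₀) = γ * (2 * (γ ^ (ℓ + 1) * lam₀)) by ring,
      Real.sqrt_mul hγ]
    exact (mul_le_mul_of_nonneg_right hαγ (Real.sqrt_nonneg _)).trans_eq (mul_assoc _ _ _)

end IHT

theorem one_div_sqrt_two_mul_lt {t C : ℝ} (ht : 0 < t) (h : 1 / (2 * t ^ 2) < C) :
    1 / Real.sqrt (2 * C) < t := by
  have hC : 0 < C := lt_of_le_of_lt (by positivity) h
  have hsq : 1 < (t * Real.sqrt (2 * C)) ^ 2 := by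
    rw [mul_pow, Real.sq_sqrt (by positivity)]
    rw [div_lt_iff₀ (by positivity)] at h
    linarith
  rw [div_lt_iff₀ (by positivity)]
  exact (one_lt_sq_iff₀ (by positivity)).1 hsq

theorem two_le_div_mul_sqrt {a m γ : ℝ} (ha : 0 < a) (hm : 0 < m) (hγ : (2 * m / a) ^ 2 ≤ γ) :
    2 ≤ a / m * Real.sqrt γ := by
  have hsqrt : 2 * m / a ≤ Real.sqrt γ := Real.le_sqrt_of_sq_le hγ
  calc (2 : ℝ) = a / m * (2 * m / a) := by field_simp
    _ ≤ a / m * Real.sqrt γ := by gcongr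

theorem le_one_div_sqrt_mul_sqrt {C ε lam : ℝ} (hC : 0 < C) (hε : 0 ≤ ε) (h : C * ε ^ 2 ≤ lam) :
    ε ≤ 1 / Real.sqrt (2 * C) * Real.sqrt (2 * lam) := by
  rw [one_div_mul_eq_div, le_div_iff₀ (by positivity), ← Real.sqrt_sq hε,
    ← Real.sqrt_mul (sq_nonneg _)]
  exact Real.sqrt_le_sqrt (by nlinarith)

/-- Theorem 1 for IHTC, parts (i)–(ii): along the continuation path `λ_ℓ = γ^ℓ λ₀`,
with `x(λ₀) = 0` and `x(λ_ℓ)` obtained by `K` hard-thresholding iterations at level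
`λ_ℓ` warm-started from `x(λ_{ℓ−1})`, stopping at the first index `ℓ*` with
`λ_{ℓ*} < λ* = C₀ε²` and returning `x* = x(λ_{ℓ*−1})`, one has
(i) `supp(x*) ⊂ A†` and (ii) `‖x* − x†‖_{ℓ∞} ≤ (√(2C₀) − 1)ε/(μs)`. -/
theorem ihtc_convergence {n p : ℕ} (Ψ : Matrix (Fin n) (Fin p) ℝ)
    (μ ε C₀ α γ lam₀ : ℝ) (s K : ℕ)
    (xdag : Fin p → ℝ) (η y : Fin n → ℝ) (Adag : Finset (Fin p))
    (hcol : ∀ i, ∑ k, Ψ k i ^ 2 = 1)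
    (hcoh : ∀ i j, i ≠ j → |∑ k, Ψ k i * Ψ k j| ≤ μ) (hμpos : 0 < μ)
    (hsuppdag : Function.support xdag = (Adag : Set (Fin p)))
    (hcard : Adag.card = s) (hs : 1 ≤ s) (hμs : μ * s < 1 / 2)
    (hy : y = Ψ.mulVec xdag + η)
    (hη : Real.sqrt (∑ k, η k ^ 2) ≤ ε) (hε : 0 < ε)
    (hC : 1 / (2 * (1 - 2 * μ * s) ^ 2) < C₀)
    (hα : α = (1 - 1 / Real.sqrt (2 * C₀)) / (μ * s))
    (hγ : γ ∈ Set.Ico ((2 * μ * s / (1 - 1 / Real.sqrt (2 * C₀))) ^ 2) 1)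
    (hK : 1 ≤ K)
    (xseq : ℕ → Fin p → ℝ)
    (hx0 : xseq 0 = 0)
    (hxstep : ∀ ℓ : ℕ, xseq (ℓ + 1) =
      (fun z : Fin p → ℝ => fun i =>
          hardThresh (γ ^ (ℓ + 1) * lam₀)
            (z i + Ψ.transpose.mulVec (y - Ψ.mulVec z) i))^[K] (xseq ℓ))
    (hlam₀ : ‖xdag‖ ≤ α * Real.sqrt (2 * γ * lam₀))
    (lstar : ℕ) (hlstar_pos : 1 ≤ lstar)
    (hlstar : γ ^ lstar * lam₀ < C₀ * ε ^ 2)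
    (hlstar_first : ∀ m < lstar, C₀ * ε ^ 2 ≤ γ ^ m * lam₀) :
    Function.support (xseq (lstar - 1)) ⊆ (Adag : Set (Fin p)) ∧
    ‖xseq (lstar - 1) - xdag‖ ≤ (Real.sqrt (2 * C₀) - 1) * ε / (μ * s) := by
  subst hy
  have hm : 0 < μ * s := mul_pos hμpos (by exact_mod_cast hs)
  have hC₀ : 0 < C₀ := lt_of_le_of_lt (by positivity) hC
  have hβ : 1 / Real.sqrt (2 * C₀) < 1 - 2 * (μ * s) :=
    one_div_sqrt_two_mul_lt (by linarith) (by rwa [← mul_assoc])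
  have hαA : #Adag * μ * α ≤ 1 - 1 / Real.sqrt (2 * C₀) := by
    rw [hcard, hα, mul_comm (s : ℝ), mul_div_cancel₀ _ hm.ne']
  have h2α : 2 ≤ α := by
    rw [hα, le_div_iff₀ hm]
    linarith
  have hαγ : 2 ≤ α * Real.sqrt γ := hα ▸
    two_le_div_mul_sqrt (by linarith) hm (by simpa only [mul_assoc] using hγ.1)
  obtain ⟨hsupp, hnorm⟩ := mem_supportedBall_of_continuation hcol hcoh hμpos.le hsuppdag.le hη
    hαA h2α ((sq_nonneg _).trans hγ.1) hαγ hK hx0 hxstep hlam₀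
    (fun ℓ hℓ => le_one_div_sqrt_mul_sqrt hC₀ hε.le (hlstar_first ℓ hℓ)) (lstar - 1) (by omega)
  rw [Nat.sub_add_cancel hlstar_pos] at hnorm
  refine ⟨hsupp, hnorm.trans ?_⟩
  calc α * Real.sqrt (2 * (γ ^ lstar * lam₀)) ≤ α * Real.sqrt (2 * (C₀ * ε ^ 2)) := by
        gcongr
    _ = (Real.sqrt (2 * C₀) - 1) * ε / (μ * s) := by
        rw [← mul_assoc, Real.sqrt_mul (by positivity), Real.sqrt_sq hε.le, hα]
        field_simp
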